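/- On the Shishkin mesh (with ρ = min(T/2, ā⁻¹ ε ln N)), the fine-part sum satisfies: Σ_{j=1}^{N/2} ∫_{ξ_{j−1}}^{ξ_j} (ξ_j − τ)(τ − ξ_{j−1}) ε⁻² e^{−ā τ/ε} dτ ≤ (h⁽¹⁾)² ā⁻¹ ε⁻¹ ≤ 2 T ā⁻² N⁻² ln N. -/

import Mathlib

/-- Shishkin transition point `ρ = min(T/2, ā⁻¹ ε ln N)`. -/
noncomputable def sRho (T abar ε : ℝ) (N : ℕ) : ℝ :=
  min (T / 2) (abar⁻¹ * ε * Real.log N)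

/-- Fine step size `h⁽¹⁾ = 2ρ/N`. -/
noncomputable def sH1 (T abar ε : ℝ) (N : ℕ) : ℝ := 2 * sRho T abar ε N / N

/-- Coarse step size `h⁽²⁾ = 2(T−ρ)/N`. -/
noncomputable def sH2 (T abar ε : ℝ) (N : ℕ) : ℝ :=
  2 * (T - sRho T abar ε N) / N

/-- Shishkin mesh points `ξ_i`. -/
noncomputable def sXi (T abar ε : ℝ) (N i : ℕ) : ℝ :=
  if i ≤ N / 2 then (i : ℝ) * sH1 T abar ε N
  else sRho T abar ε N + ((i : ℝ) - (N : ℝ) / 2) * sH2 T abar ε N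

/-! On a fine cell of width `h` the bubble `(ξ_j - τ)(τ - ξ_{j-1})` is at most `h² / 4`, so the
fine-part sum is at most `h² / 4` times the integral of the layer weight `ε⁻² e^{-ā τ / ε}` over
`[0, ρ]`, and that integral never exceeds `(ā ε)⁻¹`. The second inequality is `h = 2ρ / N`
combined with `ρ² = min(T/2, ā⁻¹ ε ln N)² ≤ (T/2) · ā⁻¹ ε ln N`. -/

open Real MeasureTheory Finset

theorem integral_bubble_mul_le {a b : ℝ} {c : ℝ → ℝ} (hab : a ≤ b)
    (hc : IntervalIntegrable c volume a b) (hc0 : ∀ τ ∈ Set.Icc a b, 0 ≤ c τ) :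
    ∫ τ in a..b, (b - τ) * (τ - a) * c τ ≤ (b - a) ^ 2 / 4 * ∫ τ in a..b, c τ := by
  rw [← intervalIntegral.integral_const_mul]
  refine intervalIntegral.integral_mono_on hab (hc.continuousOn_mul (by fun_prop))
    (hc.const_mul _) fun τ hτ => mul_le_mul_of_nonneg_right ?_ (hc0 τ hτ)
  linarith [four_mul_le_sq_add (b - τ) (τ - a)]

theorem sum_integral_bubble_mul_le {x : ℕ → ℝ} {c : ℝ → ℝ} {h : ℝ} {m : ℕ}
    (hc : Continuous c) (hc0 : 0 ≤ c)
    (hx : ∀ j ∈ Icc 1 m, x (j - 1) ≤ x j ∧ x j - x (j - 1) ≤ h) :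
    ∑ j ∈ Icc 1 m, ∫ τ in x (j - 1)..x j, (x j - τ) * (τ - x (j - 1)) * c τ
      ≤ h ^ 2 / 4 * ∫ τ in x 0..x m, c τ := by
  have hsum : ∑ j ∈ Icc 1 m, ∫ τ in x (j - 1)..x j, c τ = ∫ τ in x 0..x m, c τ := by
    have hshift : ∑ j ∈ Icc 1 m, ∫ τ in x (j - 1)..x j, c τ
        = ∑ k ∈ range m, ∫ τ in x (k + 1 - 1)..x (k + 1), c τ := by
      rw [range_eq_Ico, sum_Ico_add' fun j => ∫ τ in x (j - 1)..x j, c τ]; rfl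
    simp only [hshift, Nat.add_sub_cancel]
    exact intervalIntegral.sum_integral_adjacent_intervals fun k _ => hc.intervalIntegrable _ _
  calc _ ≤ ∑ j ∈ Icc 1 m, h ^ 2 / 4 * ∫ τ in x (j - 1)..x j, c τ := by
        refine sum_le_sum fun j hj => ?_
        obtain ⟨hmono, hstep⟩ := hx j hj
        refine (integral_bubble_mul_le hmono (hc.intervalIntegrable _ _) fun τ _ => hc0 τ).trans ?_
        gcongr
        exact intervalIntegral.integral_nonneg hmono fun τ _ => hc0 τ
    _ = h ^ 2 / 4 * ∫ τ in x 0..x m, c τ := by rw [← mul_sum, hsum]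

theorem integral_exp_neg_mul_div_le {k ε : ℝ} (hk : 0 < k) (hε : 0 < ε) (x : ℝ) :
    ∫ τ in 0..x, exp (-(k * τ) / ε) ≤ ε / k := by
  have hderiv (τ : ℝ) :
      HasDerivAt (fun t => -(ε / k) * exp (-(k * t) / ε)) (exp (-(k * τ) / ε)) τ := by
    have hu : HasDerivAt (fun t => -(k * t) / ε) (-k / ε) τ := by
      simpa using ((hasDerivAt_id τ).const_mul k).neg.div_const ε
    exact (hu.exp.const_mul (-(ε / k))).congr_deriv (by field_simp)
  rw [intervalIntegral.integral_eq_sub_of_hasDerivAt (fun τ _ => hderiv τ)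
    ((by fun_prop : Continuous fun τ => exp (-(k * τ) / ε)).intervalIntegrable _ _)]
  have := mul_pos (div_pos hε hk) (exp_pos (-(k * x) / ε))
  simp only [mul_zero, neg_zero, zero_div, exp_zero]
  linarith

theorem min_sq_le_mul {α : Type*} [Semiring α] [LinearOrder α] [IsOrderedRing α] {a b : α}
    (ha : 0 ≤ a) (hb : 0 ≤ b) : min a b ^ 2 ≤ a * b := by
  rw [sq]
  exact mul_le_mul (min_le_left a b) (min_le_right a b) (le_min ha hb) ha

section ShishkinMesh

variable {T abar ε : ℝ} {N : ℕ}

theorem sRho_nonneg (hT : 0 ≤ T) (habar : 0 ≤ abar) (hε : 0 ≤ ε) : 0 ≤ sRho T abar ε N :=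
  le_min (by linarith) (by have := log_natCast_nonneg N; positivity)

theorem sH1_nonneg (hT : 0 ≤ T) (habar : 0 ≤ abar) (hε : 0 ≤ ε) : 0 ≤ sH1 T abar ε N := by
  have := sRho_nonneg (N := N) hT habar hε
  rw [sH1]
  positivity

theorem sXi_of_le_half {i : ℕ} (hi : i ≤ N / 2) : sXi T abar ε N i = i * sH1 T abar ε N :=
  if_pos hi

@[simp]
theorem sXi_zero : sXi T abar ε N 0 = 0 := by
  simp [sXi]

theorem sXi_sub_sXi_pred {j : ℕ} (hj : j ∈ Icc 1 (N / 2)) :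
    sXi T abar ε N j - sXi T abar ε N (j - 1) = sH1 T abar ε N := by
  obtain ⟨hj1, hjN⟩ := mem_Icc.mp hj
  rw [sXi_of_le_half hjN, sXi_of_le_half (by omega), Nat.cast_sub hj1]
  ring

theorem sH1_sq_mul_le (hT : 0 ≤ T) (habar : 0 ≤ abar) (hε : 0 < ε) :
    sH1 T abar ε N ^ 2 * abar⁻¹ * ε⁻¹
      ≤ 2 * T * (abar ^ 2)⁻¹ * ((N : ℝ) ^ 2)⁻¹ * log N :=
  calc sH1 T abar ε N ^ 2 * abar⁻¹ * ε⁻¹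
      = 4 * ((N : ℝ) ^ 2)⁻¹ * abar⁻¹ * ε⁻¹ * sRho T abar ε N ^ 2 := by rw [sH1]; ring
    _ ≤ 4 * ((N : ℝ) ^ 2)⁻¹ * abar⁻¹ * ε⁻¹ * (T / 2 * (abar⁻¹ * ε * log N)) := by
        gcongr
        exact min_sq_le_mul (by linarith) (by have := log_natCast_nonneg N; positivity)
    _ = 2 * T * (abar ^ 2)⁻¹ * ((N : ℝ) ^ 2)⁻¹ * log N := by
        field_simp
        ring

end ShishkinMesh

theorem fine_part_quadrature_sum_bound_general
    (T abar ε : ℝ) (N : ℕ) (hT : 0 < T) (habar : 0 < abar)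
    (hε : 0 < ε) :
    (∑ j ∈ Finset.Icc 1 (N / 2),
        ∫ τ in sXi T abar ε N (j - 1)..sXi T abar ε N j,
          (sXi T abar ε N j - τ) * (τ - sXi T abar ε N (j - 1)) *
            ((ε ^ 2)⁻¹ * Real.exp (-(abar * τ) / ε)))
      ≤ (sH1 T abar ε N) ^ 2 * abar⁻¹ * ε⁻¹ ∧
    (sH1 T abar ε N) ^ 2 * abar⁻¹ * ε⁻¹
      ≤ 2 * T * (abar ^ 2)⁻¹ * ((N : ℝ) ^ 2)⁻¹ * Real.log N := by
  refine ⟨?_, sH1_sq_mul_le hT.le habar.le hε⟩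
  have hh : 0 ≤ sH1 T abar ε N := sH1_nonneg hT.le habar.le hε.le
  have hlayer (x : ℝ) : ∫ τ in (0 : ℝ)..x, (ε ^ 2)⁻¹ * exp (-(abar * τ) / ε) ≤ abar⁻¹ * ε⁻¹ :=
    calc ∫ τ in (0 : ℝ)..x, (ε ^ 2)⁻¹ * exp (-(abar * τ) / ε)
        ≤ (ε ^ 2)⁻¹ * (ε / abar) := by
          rw [intervalIntegral.integral_const_mul]
          gcongr
          exact integral_exp_neg_mul_div_le habar hε x
      _ = abar⁻¹ * ε⁻¹ := by field_simp
  calc _ ≤ sH1 T abar ε N ^ 2 / 4 *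
        ∫ τ in sXi T abar ε N 0..sXi T abar ε N (N / 2), (ε ^ 2)⁻¹ * exp (-(abar * τ) / ε) :=
        sum_integral_bubble_mul_le (by fun_prop) (fun τ => by positivity)
          fun j hj => by rw [← sub_nonneg, sXi_sub_sXi_pred hj]; exact ⟨hh, le_rfl⟩
    _ ≤ sH1 T abar ε N ^ 2 / 4 * (abar⁻¹ * ε⁻¹) := by
        rw [sXi_zero]
        gcongr
        exact hlayer _
    _ ≤ sH1 T abar ε N ^ 2 * abar⁻¹ * ε⁻¹ := by
        have : 0 ≤ sH1 T abar ε N ^ 2 * abar⁻¹ * ε⁻¹ := by positivity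
        linarith

/-- fine-part bound
`Σ_{j=1}^{N/2} ∫_{ξ_{j−1}}^{ξ_j} (ξ_j−τ)(τ−ξ_{j−1}) ε⁻² e^{−ā τ/ε} dτ
  ≤ (h⁽¹⁾)² ā⁻¹ ε⁻¹ ≤ 2 T ā⁻² N⁻² ln N` on the Shishkin mesh. -/
theorem fine_part_quadrature_sum_bound
    (T abar ε : ℝ) (N : ℕ) (hT : 0 < T) (habar : 0 < abar)
    (hε : 0 < ε) (hε1 : ε ≤ 1) (hN : 4 ≤ N) (hNeven : Even N) :
    (∑ j ∈ Finset.Icc 1 (N / 2),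
        ∫ τ in sXi T abar ε N (j - 1)..sXi T abar ε N j,
          (sXi T abar ε N j - τ) * (τ - sXi T abar ε N (j - 1)) *
            ((ε ^ 2)⁻¹ * Real.exp (-(abar * τ) / ε)))
      ≤ (sH1 T abar ε N) ^ 2 * abar⁻¹ * ε⁻¹ ∧
    (sH1 T abar ε N) ^ 2 * abar⁻¹ * ε⁻¹
      ≤ 2 * T * (abar ^ 2)⁻¹ * ((N : ℝ) ^ 2)⁻¹ * Real.log N :=
  fine_part_quadrature_sum_bound_general T abar ε N hT habar hε
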